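/- Let M ≤ N be positive integers. The set of extreme points of the compact convex polytope Ω is exactly Π, the set of partial permutation matrices. -/

import Mathlib

open Matrix BigOperators

/-- The set Ω of M×N doubly sub-stochastic matrices with unit row sums. -/
def Omega (M N : ℕ) : Set (Matrix (Fin M) (Fin N) ℝ) :=
  {X | (∀ i j, 0 ≤ X i j) ∧ (∀ i, ∑ j, X i j = 1) ∧ (∀ j, ∑ i, X i j ≤ 1)}

/-- The set Π of M×N partial permutation matrices. -/
def PartialPerm (M N : ℕ) : Set (Matrix (Fin M) (Fin N) ℝ) :=
  {X | (∀ i j, X i j = 0 ∨ X i j = 1) ∧ (∀ i, ∑ j, X i j = 1) ∧ (∀ j, ∑ i, X i j ≤ 1)}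

/-!
Padding a matrix of Ω with `N - M` rows that share the column deficits equally makes it doubly
stochastic, so Ω is the image of the Birkhoff polytope under deletion of the last `N - M` rows.
By Birkhoff's theorem Ω is then the convex hull of the finitely many top `M × N` blocks of
permutation matrices, which are partial permutation matrices. Conversely, a `0/1` matrix is a
vertex of the unit cube, which contains Ω.
-/

lemma le_one_of_mem_omega {M N : ℕ} {X : Matrix (Fin M) (Fin N) ℝ} (hX : X ∈ Omega M N)
    (i : Fin M) (j : Fin N) : X i j ≤ 1 :=
  (Finset.single_le_sum (fun i' _ => hX.1 i' j) (Finset.mem_univ i)).trans (hX.2.2 j)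

lemma mem_partialPerm_iff {M N : ℕ} {X : Matrix (Fin M) (Fin N) ℝ} :
    X ∈ PartialPerm M N ↔ X ∈ Omega M N ∧ ∀ i j, X i j = 0 ∨ X i j = 1 := by
  refine ⟨fun ⟨h01, hrow, hcol⟩ => ⟨⟨fun i j => ?_, hrow, hcol⟩, h01⟩,
    fun ⟨⟨_, hrow, hcol⟩, h01⟩ => ⟨h01, hrow, hcol⟩⟩
  rcases h01 i j with h | h <;> simp [h]

lemma partialPerm_subset_extremePoints (M N : ℕ) :
    PartialPerm M N ⊆ Set.extremePoints ℝ (Omega M N) := by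
  intro X hX
  rw [mem_partialPerm_iff] at hX
  have hcube : X ∈ Set.extremePoints ℝ
      (Set.univ.pi fun _ : Fin M => Set.univ.pi fun _ : Fin N => Set.Icc (0 : ℝ) 1) := by
    simp only [extremePoints_pi, Set.extremePoints_Icc zero_le_one]
    exact fun i _ j _ => hX.2 i j
  refine inter_extremePoints_subset_extremePoints_of_subset ?_ ⟨hX.1, hcube⟩
  intro Y hY i _ j _
  exact ⟨hY.1 i j, le_one_of_mem_omega hY i j⟩

lemma sum_sum_eq_of_mem_omega {M N : ℕ} {X : Matrix (Fin M) (Fin N) ℝ} (hX : X ∈ Omega M N) :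
    ∑ j, ∑ i, X i j = M := by
  rw [Finset.sum_comm]
  simp [hX.2.1]

section Padding

variable {M k : ℕ}

lemma submatrix_castAdd_mem_omega {Y : Matrix (Fin (M + k)) (Fin (M + k)) ℝ}
    (hY : Y ∈ doublyStochastic ℝ (Fin (M + k))) :
    Y.submatrix (Fin.castAdd k) id ∈ Omega M (M + k) := by
  refine ⟨fun _ _ => nonneg_of_mem_doublyStochastic hY,
    fun i => sum_row_of_mem_doublyStochastic hY _, fun j => ?_⟩
  have hcol := sum_col_of_mem_doublyStochastic hY j
  rw [Fin.sum_univ_add] at hcol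
  have hbottom : 0 ≤ ∑ b : Fin k, Y (Fin.natAdd M b) j :=
    Finset.sum_nonneg fun _ _ => nonneg_of_mem_doublyStochastic hY
  simp only [submatrix_apply, id]
  linarith

/-- The `k` added rows share the column deficits `1 - ∑ a, X a j` equally, so that every column
sums to `1`. -/
noncomputable def padRows (X : Matrix (Fin M) (Fin (M + k)) ℝ) :
    Matrix (Fin (M + k)) (Fin (M + k)) ℝ :=
  Matrix.of fun i j => Fin.addCases (fun a => X a j) (fun _ => (1 - ∑ a, X a j) / k) i

@[simp]
lemma submatrix_castAdd_padRows (X : Matrix (Fin M) (Fin (M + k)) ℝ) :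
    (padRows X).submatrix (Fin.castAdd k) id = X := by
  ext a j
  simp [padRows]

lemma sum_deficit_of_mem_omega {X : Matrix (Fin M) (Fin (M + k)) ℝ} (hX : X ∈ Omega M (M + k)) :
    ∑ j, (1 - ∑ a, X a j) = k := by
  simp [Finset.sum_sub_distrib, sum_sum_eq_of_mem_omega hX]

lemma padRows_mem_doublyStochastic {X : Matrix (Fin M) (Fin (M + k)) ℝ}
    (hX : X ∈ Omega M (M + k)) : padRows X ∈ doublyStochastic ℝ (Fin (M + k)) := by
  have hdef : ∀ j, 0 ≤ 1 - ∑ a, X a j := fun j => sub_nonneg.2 (hX.2.2 j)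
  rw [mem_doublyStochastic_iff_sum]
  refine ⟨fun i j => ?_, fun i => ?_, fun j => ?_⟩
  · refine Fin.addCases (fun a => ?_) (fun b => ?_) i
    · simpa [padRows] using hX.1 a j
    · simpa [padRows] using div_nonneg (hdef j) k.cast_nonneg
  · refine Fin.addCases (fun a => ?_) (fun b => ?_) i
    · simpa [padRows] using hX.2.1 a
    · have hk : (k : ℝ) ≠ 0 := Nat.cast_ne_zero.2 (Fin.pos b).ne'
      simp [padRows, ← Finset.sum_div, sum_deficit_of_mem_omega hX, hk]
  · have hzero : (k : ℝ) = 0 → 1 - ∑ a, X a j = 0 := fun hk =>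
      (Finset.sum_eq_zero_iff_of_nonneg fun j _ => hdef j).1
        ((sum_deficit_of_mem_omega hX).trans hk) j (Finset.mem_univ j)
    simp [padRows, Fin.sum_univ_add, mul_div_cancel_of_imp' hzero]

lemma omega_eq_image_doublyStochastic :
    Omega M (M + k) =
      (fun Y : Matrix (Fin (M + k)) (Fin (M + k)) ℝ => Y.submatrix (Fin.castAdd k) id) ''
        doublyStochastic ℝ (Fin (M + k)) := by
  refine subset_antisymm (fun X hX => ⟨padRows X, padRows_mem_doublyStochastic hX, by simp⟩) ?_
  rintro _ ⟨Y, hY, rfl⟩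
  exact submatrix_castAdd_mem_omega hY

lemma omega_eq_convexHull :
    Omega M (M + k) = convexHull ℝ (Set.range fun σ : Equiv.Perm (Fin (M + k)) =>
      (σ.permMatrix ℝ).submatrix (Fin.castAdd k) id) := by
  have hlin : IsLinearMap ℝ fun Y : Matrix (Fin (M + k)) (Fin (M + k)) ℝ =>
      Y.submatrix (Fin.castAdd k) id := ⟨fun _ _ => rfl, fun _ _ => rfl⟩
  rw [omega_eq_image_doublyStochastic, doublyStochastic_eq_convexHull_permMatrix,
    hlin.image_convexHull]
  exact congrArg _ (Set.range_comp _ _).symm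

lemma submatrix_permMatrix_mem_partialPerm (σ : Equiv.Perm (Fin (M + k))) :
    (σ.permMatrix ℝ).submatrix (Fin.castAdd k) id ∈ PartialPerm M (M + k) := by
  refine mem_partialPerm_iff.2 ⟨submatrix_castAdd_mem_omega permMatrix_mem_doublyStochastic,
    fun i j => ?_⟩
  rw [submatrix_apply, Equiv.Perm.permMatrix, PEquiv.toMatrix_apply]
  split_ifs
  exacts [Or.inr rfl, Or.inl rfl]

end Padding

theorem extremePoints_omega_general (M N : ℕ) (hMN : M ≤ N) :
    IsCompact (Omega M N) ∧ Convex ℝ (Omega M N) ∧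
      Set.extremePoints ℝ (Omega M N) = PartialPerm M N := by
  obtain ⟨k, rfl⟩ := Nat.exists_eq_add_of_le hMN
  have hΩ := omega_eq_convexHull (M := M) (k := k)
  refine ⟨hΩ ▸ (Set.finite_range _).isCompact_convexHull ℝ, hΩ ▸ convex_convexHull ℝ _,
    subset_antisymm ?_ (partialPerm_subset_extremePoints M (M + k))⟩
  rw [hΩ]
  rintro _ hX
  obtain ⟨σ, rfl⟩ := extremePoints_convexHull_subset hX
  exact submatrix_permMatrix_mem_partialPerm σ

/-- The extreme points of the compact convex polytope Ω are exactly the partial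
permutation matrices. -/
theorem extremePoints_omega (M N : ℕ) (hM : 0 < M) (hMN : M ≤ N) :
    IsCompact (Omega M N) ∧ Convex ℝ (Omega M N) ∧
      Set.extremePoints ℝ (Omega M N) = PartialPerm M N :=
  extremePoints_omega_general M N hMN
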